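/- arXiv:1906.07619 — 2 statements merged into one kernel-verified Lean document; each statement's English description precedes it below -/
import Mathlib

section
/- Let G be a maximal 3-γc-vertex critical graph. Then the independence number of G is at most the minimum degree plus one, i.e., α(G) ≤ δ(G) + 1. -/
open Finset

variable {V : Type*}

/-- `D` is a connected dominating set of `G`: every vertex is in `D` or adjacent to a
vertex of `D`, and the subgraph induced by `D` is connected. -/
def IsConnDomSet (G : SimpleGraph V) (D : Set V) : Prop :=
  (∀ v : V, v ∈ D ∨ ∃ u ∈ D, G.Adj u v) ∧ (G.induce D).Connected

/-- The connected domination number `γc(G)`. -/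
noncomputable def gammaC (G : SimpleGraph V) [Fintype V] : ℕ :=
  sInf {k | ∃ D : Finset V, D.card = k ∧ IsConnDomSet G ↑D}

/-- The independence number `α(G)`. -/
noncomputable def alpha (G : SimpleGraph V) [Fintype V] : ℕ :=
  sSup {k | ∃ I : Finset V, I.card = k ∧ (↑I : Set V).Pairwise fun u v => ¬ G.Adj u v}

/-- The clique number `ω(G)`. -/
noncomputable def omegaNum (G : SimpleGraph V) [Fintype V] : ℕ :=
  sSup {k | ∃ W : Finset V, W.card = k ∧ (↑W : Set V).Pairwise G.Adj}

/-- The minimum degree `δ(G)`. -/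
noncomputable def minDeg (G : SimpleGraph V) [Fintype V] : ℕ :=
  sInf {k | ∃ v : V, (G.neighborSet v).ncard = k}

/-- The vertex connectivity `κ(G)`: the minimum size of a set of vertices whose
deletion leaves a graph that is disconnected or has at most one vertex
(so `κ = n - 1` for the complete graph on `n` vertices). -/
noncomputable def kappa (G : SimpleGraph V) [Fintype V] : ℕ :=
  sInf {k | ∃ S : Finset V, S.card = k ∧
    (¬ (G.induce (↑S : Set V)ᶜ).Connected ∨ ((↑S : Set V)ᶜ).Subsingleton)}

/-- `G` is `3`-`γc`-edge critical: `γc(G) = 3` and adding any missing edge decreases `γc`. -/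
def EdgeCritical3 (G : SimpleGraph V) [Fintype V] : Prop :=
  gammaC G = 3 ∧ ∀ u v : V, u ≠ v → ¬ G.Adj u v →
    gammaC (G ⊔ SimpleGraph.fromEdgeSet {s(u, v)}) < 3

/-- `G` is `3`-`γc`-vertex critical: `G` is `2`-connected, `γc(G) = 3` and deleting any
vertex decreases `γc`. -/
def VertexCritical3 (G : SimpleGraph V) [Fintype V] [DecidableEq V] : Prop :=
  2 ≤ kappa G ∧ gammaC G = 3 ∧ ∀ v : V, gammaC (G.induce {w | w ≠ v}) < 3

/-- `G` is maximal `3`-`γc`-vertex critical. -/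
def MaximalVertexCritical3 (G : SimpleGraph V) [Fintype V] [DecidableEq V] : Prop :=
  EdgeCritical3 G ∧ VertexCritical3 G

/-!
Let `I` be independent and `z` a vertex with `deg z + 2 ≤ |I|`. For distinct `u, w ∈ I` outside
the closed neighbourhood of `z`, edge criticality gives a connected dominating pair of `G + uw`;
it contains `u` or `w`, which yields, say, a vertex `a ~ u` such that `{u, a}` dominates `G - w`.
Then `a` is adjacent to all of `I` except `w`, and since `deg z < |I| - 1` it is a neighbour of `z`
outside `I`. So all but at most one vertex of `I \ N[z]` own such a neighbour of `z`, and these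
neighbours are distinct, whence `|I| ≤ deg z + 1` when `z ∉ I`. When `z ∈ I` and `w₀` is the
exceptional vertex, all these neighbours are also adjacent to `w₀`; vertex criticality at `w₀`
forbids `N(z) ⊆ N(w₀)`, which recovers the missing neighbour.
-/

open SimpleGraph

def PairDominates (G : SimpleGraph V) (a b v : V) : Prop :=
  v = a ∨ v = b ∨ G.Adj a v ∨ G.Adj b v

lemma pairDominates_comm {G : SimpleGraph V} {a b v : V} :
    PairDominates G a b v ↔ PairDominates G b a v := by
  unfold PairDominates; tauto

lemma Finset.exists_eq_pair_of_card_le_two {α : Type*} [DecidableEq α] {D : Finset α}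
    (hcard : D.card ≤ 2) {x : α} (hx : x ∈ D) : ∃ c, D = {x, c} := by
  rcases (D.erase x).eq_empty_or_nonempty with h | ⟨c, hc⟩
  · exact ⟨x, by simpa [erase_eq_empty_iff, hx, ne_empty_of_mem hx] using h⟩
  · refine ⟨c, ?_⟩
    have : D.erase x = {c} := by
      refine eq_singleton_iff_unique_mem.mpr ⟨hc, fun y hy => card_le_one.mp ?_ y hy c hc⟩
      rw [card_erase_of_mem hx]; omega
    rw [← insert_erase hx, this]

section ConnDomSet

variable {W : Type*} {H : SimpleGraph W}

lemma connected_induce_pair_iff {a b : W} :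
    (H.induce {a, b}).Connected ↔ a = b ∨ H.Adj a b := by
  refine ⟨fun h => ?_, ?_⟩
  · by_contra! hab
    obtain ⟨p⟩ := h.preconnected ⟨a, by simp⟩ ⟨b, by simp⟩
    have hadj : H.Adj a p.snd := p.adj_snd (p.not_nil_of_ne (by simpa using hab.1))
    have hsnd := p.snd.2
    simp only [Set.mem_insert_iff, Set.mem_singleton_iff] at hsnd
    rcases hsnd with h | h
    · exact hadj.ne h.symm
    · exact hab.2 (h ▸ hadj)
  · rintro (rfl | h)
    · rw [Set.pair_eq_singleton, induce_singleton_eq_top]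
      exact connected_top
    · exact induce_pair_connected_of_adj h

lemma isConnDomSet_pair_iff [DecidableEq W] {a b : W} :
    IsConnDomSet H ↑({a, b} : Finset W) ↔
      (a = b ∨ H.Adj a b) ∧ ∀ v, PairDominates H a b v := by
  rw [IsConnDomSet, coe_pair, connected_induce_pair_iff]
  simp [PairDominates, or_assoc, and_comm]

variable [Fintype W]

lemma gammaC_le_card {D : Finset W} (hD : IsConnDomSet H ↑D) : gammaC H ≤ D.card :=
  Nat.sInf_le ⟨D, rfl, hD⟩

lemma exists_connDomSet_card_le_two (hc : H.Connected) (h : gammaC H < 3) :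
    ∃ D : Finset W, D.card ≤ 2 ∧ IsConnDomSet H ↑D := by
  have hne : {k | ∃ D : Finset W, D.card = k ∧ IsConnDomSet H ↑D}.Nonempty :=
    ⟨_, univ, rfl, fun v => Or.inl (by simp),
      by rw [coe_univ]; exact (induceUnivIso H).connected_iff.mpr hc⟩
  obtain ⟨D, hD, hDc⟩ := Nat.sInf_mem hne
  exact ⟨D, by rw [gammaC] at h; omega, hDc⟩

lemma exists_pairDominates_of_gammaC_lt_three (hc : H.Connected) (h : gammaC H < 3) :
    ∃ a b, (a = b ∨ H.Adj a b) ∧ ∀ v, PairDominates H a b v := by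
  classical
  obtain ⟨D, hcard, hD⟩ := exists_connDomSet_card_le_two hc h
  obtain ⟨⟨x, hx⟩⟩ := hD.2.nonempty
  obtain ⟨c, rfl⟩ := exists_eq_pair_of_card_le_two hcard hx
  exact ⟨x, c, isConnDomSet_pair_iff.mp hD⟩

lemma not_forall_pairDominates (h : 2 < gammaC H) {a b : W} (hab : a = b ∨ H.Adj a b) :
    ¬ ∀ v, PairDominates H a b v := fun hdom => by
  classical
  have := gammaC_le_card (isConnDomSet_pair_iff.mpr ⟨hab, hdom⟩)
  have := card_le_two (a := a) (b := b)
  omega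

lemma not_pairDominates_of_forall_ne (h : 2 < gammaC H) {a b y : W} (hab : a = b ∨ H.Adj a b)
    (hdom : ∀ v, v ≠ y → PairDominates H a b v) : ¬ PairDominates H a b y := fun hy =>
  not_forall_pairDominates h hab fun v => by
    by_cases hv : v = y
    · exact hv ▸ hy
    · exact hdom v hv

end ConnDomSet

section Kappa

variable {G : SimpleGraph V} [Fintype V]

lemma kappa_le_card {S : Finset V}
    (hS : ¬ (G.induce (↑S : Set V)ᶜ).Connected ∨ ((↑S : Set V)ᶜ).Subsingleton) :
    kappa G ≤ S.card :=
  Nat.sInf_le ⟨S, rfl, hS⟩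

lemma connected_induce_compl_of_card_lt_kappa {S : Finset V} (h : S.card < kappa G) :
    (G.induce (↑S : Set V)ᶜ).Connected ∧ ((↑S : Set V)ᶜ).Nontrivial := by
  simpa [not_or, Set.not_subsingleton_iff] using mt kappa_le_card h.not_ge

lemma connected_of_two_le_kappa (h : 2 ≤ kappa G) : G.Connected := by
  have := (connected_induce_compl_of_card_lt_kappa (G := G) (S := ∅)
    (by rw [card_empty]; omega)).1
  rw [coe_empty, Set.compl_empty] at this
  exact (induceUnivIso G).connected_iff.mp this

lemma exists_adj_of_two_le_kappa (h : 2 ≤ kappa G) (v : V) : ∃ u, G.Adj v u := by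
  have : Nontrivial V := by
    simpa using (connected_induce_compl_of_card_lt_kappa (G := G) (S := ∅)
      (by rw [card_empty]; omega)).2
  exact (connected_of_two_le_kappa h).preconnected.exists_adj_of_nontrivial v

lemma connected_induce_ne_of_two_le_kappa [DecidableEq V] (h : 2 ≤ kappa G) (y : V) :
    (G.induce {w | w ≠ y}).Connected := by
  have hy : ({w | w ≠ y} : Set V) = (↑({y} : Finset V))ᶜ := by ext; simp
  rw [hy]
  exact (connected_induce_compl_of_card_lt_kappa (by rw [card_singleton]; omega)).1

end Kappa

section SupEdge

variable {G : SimpleGraph V}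

lemma adj_of_sup_edge_adj {x y u v : V} (h : (G ⊔ edge x y).Adj u v) (hx : u ≠ x)
    (hy : u ≠ y) : G.Adj u v := by
  simpa [edge_adj, hx, hy] using h

lemma IsConnDomSet.of_sup_edge {x y : V} {D : Finset V} (hD : IsConnDomSet (G ⊔ edge x y) ↑D)
    (hx : x ∉ D) (hy : y ∉ D) : IsConnDomSet G ↑D := by
  have hadj {u v : V} (hu : u ∈ D) (h : (G ⊔ edge x y).Adj u v) : G.Adj u v :=
    adj_of_sup_edge_adj h (ne_of_mem_of_not_mem hu hx) (ne_of_mem_of_not_mem hu hy)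
  refine ⟨fun v => (hD.1 v).imp_right fun ⟨u, hu, h⟩ => ⟨u, hu, hadj hu h⟩, ?_⟩
  exact hD.2.mono fun u v h => hadj u.2 h

lemma pairDominates_of_sup_edge {x y v : V} (h : PairDominates (G ⊔ edge x y) x y v) :
    PairDominates G x y v := by
  simp only [PairDominates, sup_adj, edge_adj] at h ⊢
  tauto

lemma pairDominates_of_sup_edge_of_ne {x y c v : V} (hc : c ≠ y) (hv : v ≠ y)
    (h : PairDominates (G ⊔ edge x y) x c v) : PairDominates G x c v := by
  simp only [PairDominates, sup_adj, edge_adj] at h ⊢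
  tauto

end SupEdge

section Critical

variable {G : SimpleGraph V} [Fintype V] [DecidableEq V]

lemma VertexCritical3.exists_pairDominates (hV : VertexCritical3 G) (y : V) :
    ∃ d e, (d = e ∨ G.Adj d e) ∧ ∀ v, v ≠ y → PairDominates G d e v := by
  obtain ⟨hκ, -, hlt⟩ := hV
  obtain ⟨a, b, hab, hdom⟩ :=
    exists_pairDominates_of_gammaC_lt_three (connected_induce_ne_of_two_le_kappa hκ y) (hlt y)
  refine ⟨a, b, hab.imp (congrArg Subtype.val) id, fun v hv => ?_⟩
  simpa [PairDominates, Subtype.ext_iff] using hdom ⟨v, hv⟩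

lemma VertexCritical3.adj_of_neighborSet_subset (hV : VertexCritical3 G) {x w u : V}
    (hxw : x ≠ w) (hN : G.neighborSet x ⊆ G.neighborSet w) (hux : u ≠ x) (huw : u ≠ w) :
    G.Adj x u := by
  obtain ⟨d, e, hde, hdom⟩ := hV.exists_pairDominates w
  have hw := not_pairDominates_of_forall_ne (by rw [hV.2.1]; norm_num) hde hdom
  simp only [PairDominates, not_or] at hw
  have hxd : ¬ G.Adj x d := fun h => hw.2.2.1 (hN h).symm
  have hxe : ¬ G.Adj x e := fun h => hw.2.2.2 (hN h).symm
  -- `x` is dominated by `{d, e}` but adjacent to neither, so `d = e = x`.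
  obtain ⟨rfl, rfl⟩ : x = d ∧ x = e := by
    rcases hdom x hxw with rfl | rfl | h | h
    · exact ⟨rfl, hde.resolve_right hxe⟩
    · exact ⟨(hde.resolve_right fun h => hxd h.symm).symm, rfl⟩
    · exact absurd h.symm hxd
    · exact absurd h.symm hxe
  rcases hdom u huw with h | h | h | h
  · exact absurd h hux
  · exact absurd h hux
  · exact h
  · exact h

lemma forall_pairDominates_or_of_sup_edge (hγ : 2 < gammaC G) (hκ : 2 ≤ kappa G) {x y c : V}
    (hc : x = c ∨ (G ⊔ edge x y).Adj x c) (hdom : ∀ v, PairDominates (G ⊔ edge x y) x c v) :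
    (∀ v, PairDominates G x y v) ∨
      ∃ a, G.Adj x a ∧ ¬ G.Adj a y ∧ ∀ v, v ≠ y → PairDominates G x a v := by
  by_cases hcy : c = y
  · subst hcy
    exact Or.inl fun v => pairDominates_of_sup_edge (hdom v)
  have hdomG : ∀ v, v ≠ y → PairDominates G x c v := fun v hv =>
    pairDominates_of_sup_edge_of_ne hcy hv (hdom v)
  obtain ⟨a, hxa, hdoma⟩ : ∃ a, G.Adj x a ∧ ∀ v, v ≠ y → PairDominates G x a v := by
    rcases hc with rfl | h
    · obtain ⟨a, hxa⟩ := exists_adj_of_two_le_kappa hκ x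
      refine ⟨a, hxa, fun v hv => ?_⟩
      have := hdomG v hv
      unfold PairDominates at this ⊢
      tauto
    · exact ⟨c, (adj_of_sup_edge_adj h.symm h.ne.symm hcy).symm, hdomG⟩
  refine Or.inr ⟨a, hxa, fun hay => ?_, hdoma⟩
  exact not_pairDominates_of_forall_ne hγ (Or.inr hxa) hdoma (Or.inr (Or.inr (Or.inr hay)))

lemma EdgeCritical3.pairDominates_trichotomy (hE : EdgeCritical3 G) (hκ : 2 ≤ kappa G)
    {x y : V} (hxy : x ≠ y) (hn : ¬ G.Adj x y) :
    (∀ v, PairDominates G x y v) ∨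
      (∃ a, G.Adj x a ∧ ¬ G.Adj a y ∧ ∀ v, v ≠ y → PairDominates G x a v) ∨
      (∃ b, G.Adj y b ∧ ¬ G.Adj b x ∧ ∀ v, v ≠ x → PairDominates G y b v) := by
  obtain ⟨hγ, hcrit⟩ := hE
  have hγ2 : 2 < gammaC G := by omega
  obtain ⟨D, hcard, hD⟩ := exists_connDomSet_card_le_two
    ((connected_of_two_le_kappa hκ).mono le_sup_left) (hcrit x y hxy hn)
  change IsConnDomSet (G ⊔ edge x y) ↑D at hD
  by_cases hx : x ∈ D
  · obtain ⟨c, rfl⟩ := exists_eq_pair_of_card_le_two hcard hx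
    obtain ⟨hc, hdom⟩ := isConnDomSet_pair_iff.mp hD
    exact (forall_pairDominates_or_of_sup_edge hγ2 hκ hc hdom).imp_right Or.inl
  by_cases hy : y ∈ D
  · rw [edge_comm] at hD
    obtain ⟨c, rfl⟩ := exists_eq_pair_of_card_le_two hcard hy
    obtain ⟨hc, hdom⟩ := isConnDomSet_pair_iff.mp hD
    rcases forall_pairDominates_or_of_sup_edge hγ2 hκ hc hdom with h | h
    · exact Or.inl fun v => pairDominates_comm.mp (h v)
    · exact Or.inr (Or.inr h)
  have := gammaC_le_card (hD.of_sup_edge hx hy)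
  omega

end Critical

def AdjAllBut (G : SimpleGraph V) (I : Finset V) (w s : V) : Prop :=
  ¬ G.Adj s w ∧ ∀ v ∈ I, v ≠ w → G.Adj s v

section Separators

variable {G : SimpleGraph V} {I T R : Finset V}

lemma card_le_card_of_forall_adjAllBut (hTI : T ⊆ I)
    (h : ∀ w ∈ T, ∃ s ∈ R, AdjAllBut G I w s) : T.card ≤ R.card := by
  choose! f hfR hf using h
  refine card_le_card_of_injOn f hfR fun w hw w' hw' hww' => ?_
  by_contra hne
  exact (hf w' hw').1 (hww' ▸ (hf w hw).2 w' (hTI hw') (Ne.symm hne))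

variable [DecidableEq V] [DecidableRel G.Adj]
  (hTI : T ⊆ I) (hpair : ∀ u ∈ T, ∀ w ∈ T, u ≠ w →
    (∃ s ∈ R, AdjAllBut G I u s) ∨ (∃ s ∈ R, AdjAllBut G I w s))
include hTI hpair

lemma card_erase_le_card_filter_adj {w₀ : V} (hw₀ : w₀ ∈ T)
    (hbad : ¬ ∃ s ∈ R, AdjAllBut G I w₀ s) :
    (T.erase w₀).card ≤ (R.filter (G.Adj · w₀)).card :=
  card_le_card_of_forall_adjAllBut ((T.erase_subset w₀).trans hTI) fun w hw => by
    have hww₀ := ne_of_mem_erase hw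
    obtain ⟨s, hs, hsw⟩ := (hpair w (mem_of_mem_erase hw) w₀ hw₀ hww₀).resolve_right hbad
    exact ⟨s, mem_filter.mpr ⟨hs, hsw.2 w₀ (hTI hw₀) hww₀.symm⟩, hsw⟩

lemma card_le_card_add_one_of_pairwise : T.card ≤ R.card + 1 := by
  by_cases hall : ∀ w ∈ T, ∃ s ∈ R, AdjAllBut G I w s
  · have := card_le_card_of_forall_adjAllBut hTI hall
    omega
  · obtain ⟨w₀, hw₀, hbad⟩ := not_forall₂.mp hall
    have := card_erase_le_card_filter_adj hTI hpair hw₀ hbad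
    have := card_filter_le R (G.Adj · w₀)
    have := card_erase_of_mem hw₀
    omega

lemma card_le_card_of_pairwise (hR : ∀ w ∈ T, ∃ r ∈ R, ¬ G.Adj r w) :
    T.card ≤ R.card := by
  by_cases hall : ∀ w ∈ T, ∃ s ∈ R, AdjAllBut G I w s
  · exact card_le_card_of_forall_adjAllBut hTI hall
  · obtain ⟨w₀, hw₀, hbad⟩ := not_forall₂.mp hall
    have := card_erase_le_card_filter_adj hTI hpair hw₀ hbad
    obtain ⟨r, hr, hrw₀⟩ := hR w₀ hw₀
    have := card_lt_card (filter_ssubset (p := (G.Adj · w₀)).mpr ⟨r, hr, hrw₀⟩)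
    have := card_erase_of_mem hw₀
    omega

end Separators

lemma subset_insert_filter_not_adj {G : SimpleGraph V} [DecidableEq V] [DecidableRel G.Adj]
    {I : Finset V} (hI : (↑I : Set V).Pairwise fun u v => ¬ G.Adj u v) {z : V} (hz : z ∈ I) :
    I ⊆ insert z ((I.erase z).filter (¬ G.Adj z ·)) := fun v hv => by
  rcases eq_or_ne v z with rfl | hvz
  · exact mem_insert_self _ _
  · exact mem_insert_of_mem (mem_filter.mpr ⟨mem_erase.mpr ⟨hvz, hv⟩, hI hz hv hvz.symm⟩)

lemma subset_filter_not_adj_union_inter {G : SimpleGraph V} [Fintype V] [DecidableEq V]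
    [DecidableRel G.Adj] {I : Finset V} {z : V} (hz : z ∉ I) :
    I ⊆ (I.erase z).filter (¬ G.Adj z ·) ∪ (G.neighborFinset z ∩ I) := fun v hv => by
  by_cases hzv : G.Adj z v
  · exact mem_union_right _ (mem_inter.mpr ⟨(G.mem_neighborFinset _ _).mpr hzv, hv⟩)
  · exact mem_union_left _
      (mem_filter.mpr ⟨mem_erase.mpr ⟨ne_of_mem_of_not_mem hv hz, hv⟩, hzv⟩)

section Independent

variable {G : SimpleGraph V} [Fintype V] [DecidableEq V] [DecidableRel G.Adj] {I : Finset V}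
  (hI : (↑I : Set V).Pairwise fun u v => ¬ G.Adj u v)
include hI

lemma adjAllBut_of_pairDominates {z x y a : V} (hdeg : G.degree z + 2 ≤ I.card) (hx : x ∈ I)
    (hy : y ∈ I) (hzx : ¬ G.Adj z x) (hzy : z ≠ y) (hxa : G.Adj x a) (hay : ¬ G.Adj a y)
    (hdom : ∀ v, v ≠ y → PairDominates G x a v) :
    a ∈ G.neighborFinset z \ I ∧ AdjAllBut G I y a := by
  have haI : a ∉ I := fun haI => hI hx haI hxa.ne hxa
  have hall : ∀ v ∈ I, v ≠ y → G.Adj a v := fun v hv hvy => by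
    rcases hdom v hvy with rfl | rfl | h | h
    · exact hxa.symm
    · exact absurd hv haI
    · exact absurd h (hI hx hv h.ne)
    · exact h
  -- `a` sees all of `I` but `y`, which is more than the degree of `z`.
  have hza : z ≠ a := by
    rintro rfl
    have hsub : I.erase y ⊆ G.neighborFinset z := fun v hv =>
      (G.mem_neighborFinset _ _).mpr (hall v (mem_of_mem_erase hv) (ne_of_mem_erase hv))
    have := card_le_card hsub
    rw [card_erase_of_mem hy, card_neighborFinset_eq_degree] at this
    omega
  refine ⟨mem_sdiff.mpr ⟨(G.mem_neighborFinset _ _).mpr ?_, haI⟩, hay, hall⟩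
  rcases hdom z hzy with rfl | rfl | h | h
  · exact hxa
  · exact absurd rfl hza
  · exact absurd h.symm hzx
  · exact h.symm

lemma EdgeCritical3.exists_adjAllBut_or (hE : EdgeCritical3 G) (hκ : 2 ≤ kappa G) {z u w : V}
    (hdeg : G.degree z + 2 ≤ I.card) (hu : u ∈ I) (hw : w ∈ I) (huw : u ≠ w) (hzu : z ≠ u)
    (hzw : z ≠ w) (hnu : ¬ G.Adj z u) (hnw : ¬ G.Adj z w) :
    (∃ s ∈ G.neighborFinset z \ I, AdjAllBut G I u s) ∨
      (∃ s ∈ G.neighborFinset z \ I, AdjAllBut G I w s) := by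
  rcases hE.pairDominates_trichotomy hκ huw (hI hu hw huw) with
    hdom | ⟨a, hua, haw, hdom⟩ | ⟨a, hwa, hau, hdom⟩
  · rcases hdom z with h | h | h | h
    · exact absurd h hzu
    · exact absurd h hzw
    · exact absurd h.symm hnu
    · exact absurd h.symm hnw
  · exact Or.inr ⟨a, adjAllBut_of_pairDominates hI hdeg hu hw hnu hzw hua haw hdom⟩
  · exact Or.inl ⟨a, adjAllBut_of_pairDominates hI hdeg hw hu hnw hzu hwa hau hdom⟩

lemma VertexCritical3.exists_adj_not_adj (hV : VertexCritical3 G) {z w : V} (hz : z ∈ I)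
    (hzw : z ≠ w) (hcard : 3 ≤ I.card) :
    ∃ r ∈ G.neighborFinset z \ I, ¬ G.Adj r w := by
  by_contra! h
  have hN : G.neighborSet z ⊆ G.neighborSet w := fun r hr => by
    have hrI : r ∉ I := fun hrI => hI hz hrI hr.ne hr
    exact (h r (by simpa [hrI] using hr)).symm
  obtain ⟨u, huI, hu⟩ := exists_mem_notMem_of_card_lt_card
    (s := {z, w}) (lt_of_le_of_lt card_le_two hcard)
  simp only [mem_insert, mem_singleton, not_or] at hu
  exact hI hz huI (Ne.symm hu.1) (hV.adj_of_neighborSet_subset hzw hN hu.1 hu.2)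

theorem card_le_degree_add_one (hE : EdgeCritical3 G) (hV : VertexCritical3 G) (z : V) :
    I.card ≤ G.degree z + 1 := by
  by_contra! hdeg
  set P := (I.erase z).filter (¬ G.Adj z ·) with hP
  have hPI : P ⊆ I := (filter_subset _ _).trans (erase_subset _ _)
  have hpair : ∀ u ∈ P, ∀ w ∈ P, u ≠ w →
      (∃ s ∈ G.neighborFinset z \ I, AdjAllBut G I u s) ∨
        (∃ s ∈ G.neighborFinset z \ I, AdjAllBut G I w s) := fun u hu w hw huw => by
    simp only [hP, mem_filter, mem_erase] at hu hw
    exact hE.exists_adjAllBut_or hI hV.1 hdeg hu.1.2 hw.1.2 huw hu.1.1.symm hw.1.1.symm hu.2 hw.2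
  have hN := card_sdiff_add_card_inter (G.neighborFinset z) I
  rw [card_neighborFinset_eq_degree] at hN
  by_cases hz : z ∈ I
  · have hdeg_pos : 0 < G.degree z :=
      G.degree_pos_iff_exists_adj z |>.mpr (exists_adj_of_two_le_kappa hV.1 z)
    have hR : ∀ w ∈ P, ∃ r ∈ G.neighborFinset z \ I, ¬ G.Adj r w := fun w hw =>
      hV.exists_adj_not_adj hI hz (ne_of_mem_erase (mem_of_mem_filter w hw)).symm (by omega)
    have := card_le_card_of_pairwise hPI hpair hR
    have := card_le_card (show I ⊆ insert z P from subset_insert_filter_not_adj hI hz)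
    have := card_insert_le z P
    omega
  · have := card_le_card_add_one_of_pairwise hPI hpair
    have := card_le_card (show I ⊆ P ∪ (G.neighborFinset z ∩ I) from
      subset_filter_not_adj_union_inter hz)
    have := card_union_le P (G.neighborFinset z ∩ I)
    omega

end Independent

lemma exists_degree_eq_minDeg (G : SimpleGraph V) [Fintype V] [DecidableRel G.Adj] [Nonempty V] :
    ∃ z, G.degree z = minDeg G := by
  obtain ⟨z, hz⟩ := Nat.sInf_mem (s := {k | ∃ v : V, (G.neighborSet v).ncard = k})
    ⟨_, Classical.arbitrary V, rfl⟩
  refine ⟨z, ?_⟩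
  rw [minDeg, ← hz, ← Nat.card_coe_set_eq, Nat.card_eq_fintype_card, card_neighborSet_eq_degree]

/-- every maximal `3`-`γc`-vertex critical graph satisfies `α(G) ≤ δ(G) + 1`. -/
theorem stmt_0 (G : SimpleGraph V) [Fintype V] [DecidableEq V]
    (h : MaximalVertexCritical3 G) : alpha G ≤ minDeg G + 1 := by
  classical
  obtain ⟨hE, hV⟩ := h
  have : Nonempty V := (connected_of_two_le_kappa hV.1).nonempty
  obtain ⟨z, hz⟩ := exists_degree_eq_minDeg G
  refine csSup_le ⟨0, ∅, rfl, by simp⟩ ?_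
  rintro _ ⟨I, rfl, hI⟩
  exact hz ▸ card_le_degree_add_one hI hE hV z
end

section
/- For every l ≥ 2, every graph G in the class 𝒢₁(l) satisfies α(G) = κ(G) = δ(G) = l; in particular, the neighborhood of the vertex v is simultaneously a maximum independent set and a minimum cut set of G. -/
open Finset

variable {V : Type*}

/-! The neighbourhood `Z = {z₁, …, z_l}` of `v` is independent, and deleting it isolates `v`;
this gives `α ≥ l`, `κ ≤ l` and `δ ≤ l`. An independent set meeting the clique `{qⱼ}` in `qⱼ`
lies in `{v, qⱼ}` or `{qⱼ, zⱼ}`, and one missing it lies in `{v}` or in `Z`, so `α ≤ l`; every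
degree is at least `l`. Finally, deleting a set `S` of fewer than `l` vertices leaves the graph
connected. If `v ∉ S`, every survivor is joined to `v` by a path `v zᵢ`, `v zᵢ qⱼ` or
`v zⱼ qₖ qⱼ`; if `v ∈ S`, at least two `qⱼ` survive and every surviving `zᵢ` sees one of them.
Both cases rest on one count: `l` distinct vertices cannot all lie in `S`. -/

namespace Set

variable {ι : Type*} {f : ι → V}

theorem ncard_insert_image_compl_singleton [Finite ι] (hf : f.Injective) {a : V}
    (ha : a ∉ range f) (j : ι) : (insert a (f '' {j}ᶜ)).ncard = Nat.card ι := by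
  have : Nonempty ι := ⟨j⟩
  rw [ncard_insert_of_notMem (fun h => ha (image_subset_range f _ h)),
    ncard_image_of_injective _ hf, ncard_compl, ncard_singleton]
  have := Nat.card_pos (α := ι)
  omega

theorem exists_apply_notMem_of_card_lt (hf : f.Injective) {S : Finset V}
    (hS : S.card < Nat.card ι) : ∃ i, f i ∉ S := by
  by_contra! h
  have : range f ⊆ ↑S := range_subset_iff.2 h
  have := ncard_le_ncard this
  rw [ncard_range_of_injective hf, ncard_coe_finset] at this
  omega

theorem notMem_or_exists_ne_apply_notMem_of_card_lt [Finite ι] (hf : f.Injective) {a : V}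
    (ha : a ∉ range f) {S : Finset V} (hS : S.card < Nat.card ι) (j : ι) :
    a ∉ S ∨ ∃ i ≠ j, f i ∉ S := by
  by_contra! h
  have hsub : insert a (f '' {j}ᶜ) ⊆ ↑S := by
    rintro _ (rfl | ⟨i, hi, rfl⟩)
    exacts [h.1, h.2 i hi]
  have := ncard_le_ncard hsub
  rw [ncard_insert_image_compl_singleton hf ha, ncard_coe_finset] at this
  omega

end Set

namespace SimpleGraph

variable {G : SimpleGraph V}

theorem reachable_induce_of_adj {s : Set V} {a b : V} (ha : a ∈ s) (hb : b ∈ s)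
    (hab : G.Adj a b) : (G.induce s).Reachable ⟨a, ha⟩ ⟨b, hb⟩ :=
  Adj.reachable hab

theorem not_connected_induce_compl_neighborSet {a b : V} (hab : a ≠ b) (hb : ¬ G.Adj a b) :
    ¬ (G.induce (G.neighborSet a)ᶜ).Connected := by
  intro hconn
  obtain ⟨p⟩ := hconn.preconnected ⟨a, G.irrefl⟩ ⟨b, hb⟩
  cases p with
  | nil => exact hab rfl
  | @cons _ c _ hadj _ => exact c.2 hadj

end SimpleGraph

section Invariants

variable {G : SimpleGraph V} [Fintype V]

theorem ncard_le_alpha {s : Set V} (hs : G.IsIndepSet s) : s.ncard ≤ alpha G := by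
  classical
  refine le_csSup ⟨Fintype.card V, ?_⟩ ⟨s.toFinset, by rw [Set.ncard_eq_toFinset_card'], by simpa⟩
  rintro _ ⟨I, rfl, -⟩
  exact I.card_le_univ

theorem alpha_le {k : ℕ} (h : ∀ I : Finset V, G.IsIndepSet ↑I → I.card ≤ k) : alpha G ≤ k :=
  csSup_le ⟨0, ∅, by simp⟩ fun _ ⟨I, hI, hind⟩ => hI ▸ h I hind

theorem kappa_le_ncard {s : Set V} (hs : ¬ (G.induce sᶜ).Connected) : kappa G ≤ s.ncard := by
  classical
  exact Nat.sInf_le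
    ⟨s.toFinset, by rw [Set.ncard_eq_toFinset_card'], Or.inl (by rwa [Set.coe_toFinset])⟩

theorem le_kappa {k : ℕ}
    (h : ∀ S : Finset V, S.card < k →
      (G.induce (↑S : Set V)ᶜ).Connected ∧ ¬ ((↑S : Set V)ᶜ).Subsingleton) :
    k ≤ kappa G := by
  refine le_csInf ⟨_, univ, rfl, Or.inr (by simp)⟩ ?_
  rintro _ ⟨S, rfl, hS⟩
  by_contra! hlt
  obtain ⟨hconn, hbig⟩ := h S hlt
  exact hS.elim (· hconn) hbig

theorem minDeg_le_ncard (v : V) : minDeg G ≤ (G.neighborSet v).ncard :=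
  Nat.sInf_le ⟨v, rfl⟩

theorem le_minDeg [Nonempty V] {k : ℕ} (h : ∀ v, k ≤ (G.neighborSet v).ncard) :
    k ≤ minDeg G :=
  le_csInf ⟨_, Classical.arbitrary V, rfl⟩ fun _ ⟨v, hv⟩ => hv ▸ h v

end Invariants

/-- `G ∈ 𝒢₁(l)`, with `v`, `q i`, `z i` the vertices of the construction; their distinctness
follows from the adjacencies. -/
structure IsClassG1 {l : ℕ} (G : SimpleGraph V) (v : V) (q z : Fin l → V) : Prop where
  cover : ∀ w : V, w = v ∨ (∃ i, w = q i) ∨ (∃ i, w = z i)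
  adj_q_q : ∀ i j, G.Adj (q i) (q j) ↔ i ≠ j
  not_adj_z_z : ∀ i j, ¬ G.Adj (z i) (z j)
  adj_v_z : ∀ i, G.Adj v (z i)
  not_adj_v_q : ∀ i, ¬ G.Adj v (q i)
  adj_z_q : ∀ i j, G.Adj (z i) (q j) ↔ j ≠ i

namespace IsClassG1

open SimpleGraph

variable {l : ℕ} {G : SimpleGraph V} {v : V} {q z : Fin l → V} (h : IsClassG1 G v q z)
include h

theorem q_injective : q.Injective := fun i j hij => by
  by_contra hne
  exact G.irrefl (hij ▸ (h.adj_q_q i j).2 hne)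

theorem z_injective : z.Injective := fun i j hij => by
  by_contra hne
  exact (h.adj_z_q i i).1 (hij ▸ (h.adj_z_q j i).2 hne) rfl

theorem v_notMem_range_q : v ∉ Set.range q := by
  rintro ⟨i, rfl⟩
  exact (h.adj_z_q i i).1 (h.adj_v_z i).symm rfl

theorem v_notMem_range_z : v ∉ Set.range z := by
  rintro ⟨i, hi⟩
  exact G.irrefl (hi ▸ h.adj_v_z i)

theorem q_notMem_range_z (k : Fin l) : q k ∉ Set.range z := fun ⟨i, hi⟩ =>
  h.not_adj_v_q k (hi ▸ h.adj_v_z i)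

theorem neighborSet_v : G.neighborSet v = Set.range z := by
  ext w
  refine ⟨fun hw => ?_, fun ⟨i, hi⟩ => hi ▸ h.adj_v_z i⟩
  rcases h.cover w with rfl | ⟨i, rfl⟩ | ⟨i, rfl⟩
  · exact absurd hw G.irrefl
  · exact absurd hw (h.not_adj_v_q i)
  · exact ⟨i, rfl⟩

theorem ncard_neighborSet_v : (G.neighborSet v).ncard = l := by
  rw [h.neighborSet_v, Set.ncard_range_of_injective h.z_injective, Nat.card_fin]

theorem isIndepSet_neighborSet_v : G.IsIndepSet (G.neighborSet v) := by
  rw [h.neighborSet_v]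
  rintro _ ⟨i, rfl⟩ _ ⟨j, rfl⟩ -
  exact h.not_adj_z_z i j

theorem subset_of_q_mem {s : Set V} (hs : G.IsIndepSet s) {j : Fin l} (hj : q j ∈ s) :
    s ⊆ {v, q j} ∨ s ⊆ {q j, z j} := by
  have hmem : ∀ w ∈ s, w = v ∨ w = q j ∨ w = z j := by
    intro w hw
    rcases h.cover w with rfl | ⟨k, rfl⟩ | ⟨i, rfl⟩
    · exact .inl rfl
    · refine .inr (.inl (congrArg q ?_))
      by_contra hkj
      have hadj := (h.adj_q_q k j).2 hkj
      exact hs hw hj hadj.ne hadj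
    · refine .inr (.inr (congrArg z ?_))
      by_contra hij
      have hadj := (h.adj_z_q i j).2 (Ne.symm hij)
      exact hs hw hj hadj.ne hadj
  by_cases hv : v ∈ s
  · refine .inl fun w hw => ?_
    rcases hmem w hw with rfl | rfl | rfl
    · exact .inl rfl
    · exact .inr rfl
    · exact absurd (h.adj_v_z j) (hs hv hw (h.adj_v_z j).ne)
  · refine .inr fun w hw => ?_
    rcases hmem w hw with rfl | rfl | rfl
    · exact absurd hw hv
    · exact .inl rfl
    · exact .inr rfl

theorem subset_of_forall_q_notMem {s : Set V} (hs : G.IsIndepSet s) (hq : ∀ j, q j ∉ s) :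
    s ⊆ {v} ∨ s ⊆ Set.range z := by
  by_cases hv : v ∈ s
  · refine .inl fun w hw => ?_
    rcases h.cover w with rfl | ⟨k, rfl⟩ | ⟨i, rfl⟩
    · rfl
    · exact absurd hw (hq k)
    · exact absurd (h.adj_v_z i) (hs hv hw (h.adj_v_z i).ne)
  · refine .inr fun w hw => ?_
    rcases h.cover w with rfl | ⟨k, rfl⟩ | ⟨i, rfl⟩
    · exact absurd hw hv
    · exact absurd hw (hq k)
    · exact ⟨i, rfl⟩

theorem ncard_le_of_isIndepSet (hl : 2 ≤ l) {s : Set V} (hs : G.IsIndepSet s) :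
    s.ncard ≤ l := by
  have hpair (a b : V) : ({a, b} : Set V).ncard ≤ l :=
    (Set.ncard_insert_le a {b}).trans (by rw [Set.ncard_singleton]; omega)
  by_cases hq : ∃ j, q j ∈ s
  · obtain ⟨j, hj⟩ := hq
    rcases h.subset_of_q_mem hs hj with hsub | hsub <;>
      exact (Set.ncard_le_ncard hsub).trans (hpair _ _)
  · rcases h.subset_of_forall_q_notMem hs (not_exists.1 hq) with hsub | hsub
    · exact (Set.ncard_le_ncard hsub).trans (by rw [Set.ncard_singleton]; omega)
    · calc s.ncard ≤ (Set.range z).ncard := Set.ncard_le_ncard hsub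
        _ = l := by rw [Set.ncard_range_of_injective h.z_injective, Nat.card_fin]

theorem le_ncard_neighborSet [Finite V] (hl : 2 ≤ l) (w : V) : l ≤ (G.neighborSet w).ncard := by
  have hcard : 1 < Fintype.card (Fin l) := by simp; omega
  rcases h.cover w with rfl | ⟨j, rfl⟩ | ⟨i, rfl⟩
  · exact h.ncard_neighborSet_v.ge
  · obtain ⟨k, hkj⟩ := Fintype.exists_ne_of_one_lt_card hcard j
    calc l = (insert (q k) (z '' {j}ᶜ)).ncard := by
          rw [Set.ncard_insert_image_compl_singleton h.z_injective (h.q_notMem_range_z k),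
            Nat.card_fin]
      _ ≤ _ := by
          refine Set.ncard_le_ncard ?_
          rintro _ (rfl | ⟨i, hij, rfl⟩)
          · exact (h.adj_q_q j k).2 (Ne.symm hkj)
          · exact ((h.adj_z_q i j).2 (Ne.symm hij)).symm
  · calc l = (insert v (q '' {i}ᶜ)).ncard := by
          rw [Set.ncard_insert_image_compl_singleton h.q_injective h.v_notMem_range_q,
            Nat.card_fin]
      _ ≤ _ := by
          refine Set.ncard_le_ncard ?_
          rintro _ (rfl | ⟨j, hji, rfl⟩)
          · exact (h.adj_v_z i).symm
          · exact (h.adj_z_q i j).2 hji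

theorem reachable_of_v_notMem (hl : 2 ≤ l) {S : Finset V} (hS : S.card < l) (hv : v ∉ S)
    (w : V) (hw : w ∉ S) : (G.induce (↑S : Set V)ᶜ).Reachable ⟨v, hv⟩ ⟨w, hw⟩ := by
  have hS' : S.card < Nat.card (Fin l) := by rwa [Nat.card_fin]
  rcases h.cover w with rfl | ⟨j, rfl⟩ | ⟨i, rfl⟩
  · rfl
  · have via_z (i : Fin l) (hi : z i ∉ S) (hij : i ≠ j) :
        (G.induce (↑S : Set V)ᶜ).Reachable ⟨v, hv⟩ ⟨q j, hw⟩ :=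
      (reachable_induce_of_adj hv hi (h.adj_v_z i)).trans
        (reachable_induce_of_adj hi hw ((h.adj_z_q i j).2 (Ne.symm hij)))
    obtain ⟨k, hkj⟩ := Fintype.exists_ne_of_one_lt_card (by simp; omega) j
    rcases Set.notMem_or_exists_ne_apply_notMem_of_card_lt h.z_injective (h.q_notMem_range_z k)
      hS' j with hk | ⟨i, hij, hi⟩
    · obtain ⟨i, hi⟩ := Set.exists_apply_notMem_of_card_lt h.z_injective hS'
      by_cases hij : i = j
      · subst hij
        exact (reachable_induce_of_adj hv hi (h.adj_v_z i)).trans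
          ((reachable_induce_of_adj hi hk ((h.adj_z_q i k).2 hkj)).trans
            (reachable_induce_of_adj hk hw ((h.adj_q_q k i).2 hkj)))
      · exact via_z i hi hij
    · exact via_z i hi hij
  · exact reachable_induce_of_adj hv hw (h.adj_v_z i)

theorem exists_reachable_of_v_mem {S : Finset V} (hS : S.card < l) (hv : v ∈ S) :
    ∃ j, ∃ hj : q j ∉ S, ∀ (w : V) (hw : w ∉ S),
      (G.induce (↑S : Set V)ᶜ).Reachable ⟨q j, hj⟩ ⟨w, hw⟩ := by
  have alive_q_ne (i : Fin l) : ∃ j ≠ i, q j ∉ S :=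
    (Set.notMem_or_exists_ne_apply_notMem_of_card_lt h.q_injective h.v_notMem_range_q
      (by rwa [Nat.card_fin]) i).resolve_left (not_not.2 hv)
  obtain ⟨j, -, hj⟩ := alive_q_ne ⟨0, by omega⟩
  have via_clique (k : Fin l) (hk : q k ∉ S) :
      (G.induce (↑S : Set V)ᶜ).Reachable ⟨q j, hj⟩ ⟨q k, hk⟩ := by
    by_cases hjk : j = k
    · subst hjk
      rfl
    · exact reachable_induce_of_adj hj hk ((h.adj_q_q j k).2 hjk)
  refine ⟨j, hj, fun w hw => ?_⟩
  rcases h.cover w with rfl | ⟨k, rfl⟩ | ⟨i, rfl⟩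
  · exact absurd hv hw
  · exact via_clique k hw
  · obtain ⟨k, hki, hk⟩ := alive_q_ne i
    exact (via_clique k hk).trans (reachable_induce_of_adj hk hw ((h.adj_z_q i k).2 hki).symm)

theorem connected_induce_compl (hl : 2 ≤ l) {S : Finset V} (hS : S.card < l) :
    (G.induce (↑S : Set V)ᶜ).Connected := by
  rw [connected_iff_exists_forall_reachable]
  by_cases hv : v ∈ S
  · obtain ⟨j, hj, hreach⟩ := h.exists_reachable_of_v_mem hS hv
    exact ⟨⟨q j, hj⟩, fun ⟨w, hw⟩ => hreach w hw⟩
  · exact ⟨⟨v, hv⟩, fun ⟨w, hw⟩ => h.reachable_of_v_notMem hl hS hv w hw⟩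

theorem not_subsingleton_compl {S : Finset V} (hS : S.card < l) :
    ¬ ((↑S : Set V)ᶜ).Subsingleton := by
  have hS' : S.card < Nat.card (Fin l) := by rwa [Nat.card_fin]
  intro hsub
  obtain ⟨i, hi⟩ := Set.exists_apply_notMem_of_card_lt h.z_injective hS'
  rcases Set.notMem_or_exists_ne_apply_notMem_of_card_lt h.z_injective h.v_notMem_range_z hS' i
    with hv | ⟨j, hji, hj⟩
  · exact h.v_notMem_range_z ⟨i, hsub hi hv⟩
  · exact hji (h.z_injective (hsub hj hi))

end IsClassG1

theorem stmt_4_general (l : ℕ) (hl : 2 ≤ l) (G : SimpleGraph V) [Fintype V]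
    (v : V) (q z : Fin l → V)
    (hcover : ∀ w : V, w = v ∨ (∃ i, w = q i) ∨ (∃ i, w = z i))
    (hqq : ∀ i j, G.Adj (q i) (q j) ↔ i ≠ j)
    (hzz : ∀ i j, ¬ G.Adj (z i) (z j))
    (hvzadj : ∀ i, G.Adj v (z i)) (hvqadj : ∀ i, ¬ G.Adj v (q i))
    (hzq : ∀ i j, G.Adj (z i) (q j) ↔ j ≠ i) :
    alpha G = l ∧ kappa G = l ∧ minDeg G = l ∧
      (G.neighborSet v).Pairwise (fun a b => ¬ G.Adj a b) ∧
      (G.neighborSet v).ncard = alpha G ∧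
      ¬ (G.induce (G.neighborSet v)ᶜ).Connected ∧
      (G.neighborSet v).ncard = kappa G := by
  have h : IsClassG1 G v q z := ⟨hcover, hqq, hzz, hvzadj, hvqadj, hzq⟩
  have hdeg := h.ncard_neighborSet_v
  let i₀ : Fin l := ⟨0, by omega⟩
  have hdisc : ¬ (G.induce (G.neighborSet v)ᶜ).Connected :=
    SimpleGraph.not_connected_induce_compl_neighborSet
      (fun hvq => h.v_notMem_range_q ⟨i₀, hvq.symm⟩) (hvqadj i₀)
  have halpha : alpha G = l := le_antisymm (alpha_le fun _ hI => by
      simpa using h.ncard_le_of_isIndepSet hl hI)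
    (hdeg ▸ ncard_le_alpha h.isIndepSet_neighborSet_v)
  have hkappa : kappa G = l := le_antisymm (hdeg ▸ kappa_le_ncard hdisc)
    (le_kappa fun _ hS => ⟨h.connected_induce_compl hl hS, h.not_subsingleton_compl hS⟩)
  have hminDeg : minDeg G = l := by
    have : Nonempty V := ⟨v⟩
    exact le_antisymm (hdeg ▸ minDeg_le_ncard v) (le_minDeg (h.le_ncard_neighborSet hl))
  exact ⟨halpha, hkappa, hminDeg, h.isIndepSet_neighborSet_v, hdeg.trans halpha.symm, hdisc,
    hdeg.trans hkappa.symm⟩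

/-- every graph `G` in the class `𝒢₁(l)` (`l ≥ 2`) satisfies
`α(G) = κ(G) = δ(G) = l`; in particular the neighbourhood of the special vertex `v`
is simultaneously a maximum independent set and a minimum cut set of `G`. -/
theorem stmt_4 (l : ℕ) (hl : 2 ≤ l) (G : SimpleGraph V) [Fintype V] [DecidableEq V]
    (v : V) (q z : Fin l → V)
    (hqinj : Function.Injective q) (hzinj : Function.Injective z)
    (hqz : ∀ i j, q i ≠ z j) (hvq : ∀ i, v ≠ q i) (hvz : ∀ i, v ≠ z i)
    (hcover : ∀ w : V, w = v ∨ (∃ i, w = q i) ∨ (∃ i, w = z i))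
    (hqq : ∀ i j, G.Adj (q i) (q j) ↔ i ≠ j)
    (hzz : ∀ i j, ¬ G.Adj (z i) (z j))
    (hvzadj : ∀ i, G.Adj v (z i)) (hvqadj : ∀ i, ¬ G.Adj v (q i))
    (hzq : ∀ i j, G.Adj (z i) (q j) ↔ j ≠ i) :
    alpha G = l ∧ kappa G = l ∧ minDeg G = l ∧
      (G.neighborSet v).Pairwise (fun a b => ¬ G.Adj a b) ∧
      (G.neighborSet v).ncard = alpha G ∧
      ¬ (G.induce (G.neighborSet v)ᶜ).Connected ∧
      (G.neighborSet v).ncard = kappa G :=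
  stmt_4_general l hl G v q z hcover hqq hzz hvzadj hvqadj hzq
end
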